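/- There exists a constant C_Γ > 0, depending only on the Schottky data, such that for every nonempty word 𝐚 ∈ W°: C_Γ^{-1} |I_𝐚| ≤ |I_{𝐚̄}| ≤ C_Γ |I_𝐚|, where 𝐚̄ denotes the reversed-and-barred word. -/

import Mathlib

open MeasureTheory Set Real Pointwise

noncomputable section

abbrev SL2 := Matrix.SpecialLinearGroup (Fin 2) ℝ

/-- The Möbius transformation of `ℝ` associated to `g ∈ SL(2,ℝ)` (junk value at the pole). -/
def mobius (g : SL2) (x : ℝ) : ℝ :=
  (g 0 0 * x + g 0 1) / (g 1 0 * x + g 1 1)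

/-- The derivative `γ'(x) = (cx+d)⁻²` of the Möbius transformation. -/
def mobiusDeriv (g : SL2) (x : ℝ) : ℝ :=
  ((g 1 0 * x + g 1 1) ^ 2)⁻¹

/-- The derivative of the Möbius transformation in the ball model,
`|γ'(x)|_B = ((1+x²)/(1+γ(x)²)) γ'(x)`. -/
def mobiusDerivB (g : SL2) (x : ℝ) : ℝ :=
  ((1 + x ^ 2) / (1 + mobius g x ^ 2)) * mobiusDeriv g x

/-- The Möbius action of `SL(2,ℝ)` on `ℝ ∪ {∞}`. -/
def mobiusOP (g : SL2) (x : OnePoint ℝ) : OnePoint ℝ :=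
  Option.elim x
    (if g 1 0 = 0 then OnePoint.infty else ((g 0 0 / g 1 0 : ℝ) : OnePoint ℝ))
    (fun y => if g 1 0 * y + g 1 1 = 0 then OnePoint.infty
      else ((mobius g y : ℝ) : OnePoint ℝ))

/-- The pole `γ⁻¹(∞) = -d/c` of `γ = [[a,b],[c,d]]`. -/
def mobiusPole (g : SL2) : ℝ := -(g 1 1) / (g 1 0)

/-- The distortion factor `α(γ, [x₀,x₁]) = log((γ⁻¹(∞) − x₁)/(γ⁻¹(∞) − x₀))`,
with the convention `α = 0` when `γ⁻¹(∞) = ∞` (i.e. `c = 0`). -/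
def alphaDist (g : SL2) (x₀ x₁ : ℝ) : ℝ :=
  if g 1 0 = 0 then 0 else Real.log ((mobiusPole g - x₁) / (mobiusPole g - x₀))

/-- The letter `ā` paired with `a` in the alphabet `{1,…,2r}` (modelled by `Fin (2r)`). -/
def bar {r : ℕ} (a : Fin (2 * r)) : Fin (2 * r) :=
  if h : (a : ℕ) < r then ⟨(a : ℕ) + r, by omega⟩
  else ⟨(a : ℕ) - r, by have := a.isLt; omega⟩

/-- Schottky data: `2r` disjoint compact intervals `I_a = [ξ₀ a, ξ₁ a]` on the real line and
transformations `γ_a ∈ SL(2,ℝ)` with `γ_ā = γ_a⁻¹` such that `γ_a` maps the complement (in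
`ℝ ∪ {∞}`) of the interior of `I_ā` onto `I_a`. -/
structure SchottkyData (r : ℕ) where
  hr : 2 ≤ r
  ξ₀ : Fin (2 * r) → ℝ
  ξ₁ : Fin (2 * r) → ℝ
  hlt : ∀ a, ξ₀ a < ξ₁ a
  hdisj : ∀ a b, a ≠ b → Disjoint (Icc (ξ₀ a) (ξ₁ a)) (Icc (ξ₀ b) (ξ₁ b))
  γ : Fin (2 * r) → SL2
  hinv : ∀ a, γ (bar a) = (γ a)⁻¹
  hmap : ∀ a, mobiusOP (γ a) ''
      (univ \ ((fun t : ℝ => (t : OnePoint ℝ)) '' Ioo (ξ₀ (bar a)) (ξ₁ (bar a))))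
      = (fun t : ℝ => (t : OnePoint ℝ)) '' Icc (ξ₀ a) (ξ₁ a)

namespace SchottkyData

variable {r : ℕ}

/-- `l` is a word: no letter is followed by its bar. -/
def IsWord (_ : SchottkyData r) (l : List (Fin (2 * r))) : Prop :=
  l.Chain' fun p q => q ≠ bar p

/-- The group element `γ_𝐚 = γ_{a_1} ⋯ γ_{a_n}` of a word. -/
def wordγ (S : SchottkyData r) (l : List (Fin (2 * r))) : SL2 :=
  (l.map S.γ).prod

/-- The interval `I_𝐚 = γ_{𝐚'}(I_{a_n})` of a nonempty word (and `∅` for the empty word). -/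
def wordI (S : SchottkyData r) (l : List (Fin (2 * r))) : Set ℝ :=
  if h : l = [] then ∅
  else mobius (S.wordγ l.dropLast) '' Icc (S.ξ₀ (l.getLast h)) (S.ξ₁ (l.getLast h))

/-- The limit set `Λ_Γ = ⋂_n ⋃_{𝐚 ∈ W_n} I_𝐚`. -/
def limitSet (S : SchottkyData r) : Set ℝ :=
  ⋂ n : ℕ, ⋃ (l : List (Fin (2 * r))) (_ : S.IsWord l ∧ l.length = n + 1), S.wordI l

/-- `μ` is the (δ-conformal) Patterson–Sullivan measure: a Borel probability measure
supported on the limit set satisfying the equivariance property under the group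
generated by the Schottky transformations. -/
def IsPS (S : SchottkyData r) (δ : ℝ) (μ : Measure ℝ) : Prop :=
  IsProbabilityMeasure μ ∧ μ S.limitSetᶜ = 0 ∧
    ∀ g ∈ Subgroup.closure (Set.range S.γ), ∀ f : ℝ → ℝ, Measurable f →
      (∃ C, ∀ x, |f x| ≤ C) →
      ∫ x, f x ∂μ = ∫ x, f (mobius g x) * mobiusDerivB g x ^ δ ∂μ

/-- The partition `Z(τ) = {𝐚 ∈ W° : |I_𝐚| ≤ τ < |I_{𝐚'}|}` (with `|I_∅| = ∞`). -/
def Zpart (S : SchottkyData r) (τ : ℝ) : Set (List (Fin (2 * r))) :=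
  {l | S.IsWord l ∧ l ≠ [] ∧ (MeasureTheory.volume (S.wordI l)).toReal ≤ τ ∧
    (l.dropLast = [] ∨ τ < (MeasureTheory.volume (S.wordI l.dropLast)).toReal)}

end SchottkyData

/-- The length `|I|` of an interval `I ⊂ ℝ`. -/
def ivlen (I : Set ℝ) : ℝ := (MeasureTheory.volume I).toReal

/-- `𝐚 ⇝ 𝐛` : the last letter of `𝐚` equals the first letter of `𝐛`. -/
def chn {X : Type*} (l m : List X) : Prop :=
  ∃ (h1 : l ≠ []) (h2 : m ≠ []), l.getLast h1 = m.head h2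

/-- The center of an interval. -/
def ctr (I : Set ℝ) : ℝ := (sInf I + sSup I) / 2

end

/-!
The interval `I_𝐚` is the image of `I_{aₙ}` under `γ_{𝐚'}`, and by ping-pong the pole of `γ_{𝐚'}`
lies in `I_{ā}` for the last letter `a` of `𝐚'`, at a uniform distance from `I_{aₙ}`. So the
derivative of `γ_{𝐚'}` on `I_{aₙ}` is uniformly comparable to `‖γ_{𝐚'}‖⁻²` (Frobenius norm), and
`|I_𝐚| ≍ ‖γ_{a₁…aₙ₋₁}‖⁻²`. For the reversed word, `γ_{𝐚̄'} = γ_{a₂…aₙ}⁻¹` has the norm of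
`γ_{a₂…aₙ}`, which differs from `γ_{a₁…aₙ₋₁}` by one letter at each end, hence has comparable norm.
-/

open Filter Topology

def frobSq (g : SL2) : ℝ := g 0 0 ^ 2 + g 0 1 ^ 2 + g 1 0 ^ 2 + g 1 1 ^ 2

lemma SL2.det_eq (g : SL2) : g 0 0 * g 1 1 - g 0 1 * g 1 0 = 1 := by
  have h := g.2
  rwa [Matrix.det_fin_two] at h

lemma SL2.mul_apply (g h : SL2) (i j : Fin 2) :
    (g * h) i j = g i 0 * h 0 j + g i 1 * h 1 j := by
  simp [Matrix.SpecialLinearGroup.coe_mul, Matrix.mul_apply, Fin.sum_univ_two]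

lemma frobSq_inv (g : SL2) : frobSq g⁻¹ = frobSq g := by
  simp only [frobSq, Matrix.SpecialLinearGroup.SL2_inv_expl g, Matrix.cons_val',
    Matrix.cons_val_zero, Matrix.cons_val_fin_one, Matrix.cons_val_one, even_two, Even.neg_pow]
  ring

lemma frobSq_mul_le (g h : SL2) : frobSq (g * h) ≤ frobSq g * frobSq h := by
  simp only [frobSq, SL2.mul_apply]
  nlinarith [sq_nonneg (g 0 0 * h 1 0 - g 0 1 * h 0 0), sq_nonneg (g 0 0 * h 1 1 - g 0 1 * h 0 1),
    sq_nonneg (g 1 0 * h 1 0 - g 1 1 * h 0 0), sq_nonneg (g 1 0 * h 1 1 - g 1 1 * h 0 1)]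

lemma frobSq_pos (g : SL2) : 0 < frobSq g := by
  have := SL2.det_eq g
  simp only [frobSq]
  nlinarith [sq_nonneg (g 0 0 - g 1 1), sq_nonneg (g 0 1 + g 1 0)]

lemma frobSq_right_le_mul (g h : SL2) : frobSq h ≤ frobSq g * frobSq (g * h) := by
  simpa [frobSq_inv] using frobSq_mul_le g⁻¹ (g * h)

lemma frobSq_left_le_mul (g h : SL2) : frobSq g ≤ frobSq (g * h) * frobSq h := by
  simpa [frobSq_inv] using frobSq_mul_le (g * h) h⁻¹

lemma mobius_one (x : ℝ) : mobius 1 x = x := by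
  simp [mobius]

lemma mobiusOP_coe (g : SL2) (x : ℝ) :
    mobiusOP g x = if g 1 0 * x + g 1 1 = 0 then OnePoint.infty else (mobius g x : OnePoint ℝ) :=
  rfl

lemma denom_mul (g h : SL2) {x : ℝ} (hx : h 1 0 * x + h 1 1 ≠ 0) :
    (g * h) 1 0 * x + (g * h) 1 1 = (h 1 0 * x + h 1 1) * (g 1 0 * mobius h x + g 1 1) := by
  simp only [mobius, SL2.mul_apply]
  field_simp
  ring

lemma mobius_mul (g h : SL2) {x : ℝ} (hx : h 1 0 * x + h 1 1 ≠ 0) :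
    mobius (g * h) x = mobius g (mobius h x) := by
  have hnum : (g * h) 0 0 * x + (g * h) 0 1
      = (h 1 0 * x + h 1 1) * (g 0 0 * mobius h x + g 0 1) := by
    simp only [mobius, SL2.mul_apply]
    field_simp
    ring
  rw [mobius, hnum, denom_mul g h hx, mul_div_mul_left _ _ hx]
  rfl

lemma mobius_sub_mobius (g : SL2) {s t : ℝ} (hs : g 1 0 * s + g 1 1 ≠ 0)
    (ht : g 1 0 * t + g 1 1 ≠ 0) :
    mobius g t - mobius g s = (t - s) / ((g 1 0 * s + g 1 1) * (g 1 0 * t + g 1 1)) := by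
  rw [mobius, mobius, div_sub_div _ _ ht hs,
    mul_comm (g 1 0 * t + g 1 1) (g 1 0 * s + g 1 1)]
  congr 1
  linear_combination (t - s) * SL2.det_eq g

lemma mul_pos_of_forall_ne_zero {f : ℝ → ℝ} {a b s t : ℝ} (hf : ContinuousOn f (Icc a b))
    (h0 : ∀ y ∈ Icc a b, f y ≠ 0) (hs : s ∈ Icc a b) (ht : t ∈ Icc a b) : 0 < f s * f t := by
  by_contra! hst
  have hsub : uIcc s t ⊆ Icc a b := uIcc_subset_Icc hs ht
  have hzero : (0 : ℝ) ∈ uIcc (f s) (f t) := by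
    rcases mul_nonpos_iff.mp hst with h | h
    · exact mem_uIcc.mpr (Or.inr ⟨h.2, h.1⟩)
    · exact mem_uIcc.mpr (Or.inl ⟨h.1, h.2⟩)
  obtain ⟨y, hy, hy0⟩ := intermediate_value_uIcc (hf.mono hsub) hzero
  exact h0 y (hsub hy) hy0

section MobiusImage

variable (g : SL2) {x₀ x₁ : ℝ}

lemma denom_mul_denom_pos {s t : ℝ} (hden : ∀ x ∈ Icc x₀ x₁, g 1 0 * x + g 1 1 ≠ 0)
    (hs : s ∈ Icc x₀ x₁) (ht : t ∈ Icc x₀ x₁) :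
    0 < (g 1 0 * s + g 1 1) * (g 1 0 * t + g 1 1) :=
  mul_pos_of_forall_ne_zero (f := fun x => g 1 0 * x + g 1 1) (by fun_prop) hden hs ht

lemma strictMonoOn_mobius (hden : ∀ x ∈ Icc x₀ x₁, g 1 0 * x + g 1 1 ≠ 0) :
    StrictMonoOn (mobius g) (Icc x₀ x₁) := by
  intro s hs t ht hst
  have hdiff := mobius_sub_mobius g (hden s hs) (hden t ht)
  have : 0 < mobius g t - mobius g s := by
    rw [hdiff]
    exact div_pos (sub_pos.mpr hst) (denom_mul_denom_pos g hden hs ht)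
  linarith

lemma mobius_image_Icc (hden : ∀ x ∈ Icc x₀ x₁, g 1 0 * x + g 1 1 ≠ 0) (h : x₀ ≤ x₁) :
    mobius g '' Icc x₀ x₁ = Icc (mobius g x₀) (mobius g x₁) :=
  ContinuousOn.image_Icc_of_monotoneOn h
    (ContinuousOn.div (by fun_prop) (by fun_prop) hden) (strictMonoOn_mobius g hden).monotoneOn

lemma ivlen_mobius_image_Icc (hden : ∀ x ∈ Icc x₀ x₁, g 1 0 * x + g 1 1 ≠ 0) (h : x₀ ≤ x₁) :
    ivlen (mobius g '' Icc x₀ x₁)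
      = (x₁ - x₀) / ((g 1 0 * x₀ + g 1 1) * (g 1 0 * x₁ + g 1 1)) := by
  have hx₀ : x₀ ∈ Icc x₀ x₁ := left_mem_Icc.mpr h
  have hx₁ : x₁ ∈ Icc x₀ x₁ := right_mem_Icc.mpr h
  have hmono := (strictMonoOn_mobius g hden).monotoneOn hx₀ hx₁ h
  rw [ivlen, mobius_image_Icc g hden h, Real.volume_Icc,
    ENNReal.toReal_ofReal (sub_nonneg.mpr hmono), mobius_sub_mobius g (hden _ hx₀) (hden _ hx₁)]

end MobiusImage

lemma frobSq_mul_sq_le (g : SL2) {x₀ x₁ : ℝ} (h₀ : g 1 0 * x₀ + g 1 1 ≠ 0)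
    (h₁ : g 1 0 * x₁ + g 1 1 ≠ 0) :
    frobSq g * (x₁ - x₀) ^ 2 ≤ ((1 + mobius g x₁ ^ 2) * (1 + x₀ ^ 2)
      + (1 + mobius g x₀ ^ 2) * (1 + x₁ ^ 2))
      * ((g 1 0 * x₀ + g 1 1) ^ 2 + (g 1 0 * x₁ + g 1 1) ^ 2) := by
  set u₀ := g 1 0 * x₀ + g 1 1
  set u₁ := g 1 0 * x₁ + g 1 1
  set m₀ := mobius g x₀
  set m₁ := mobius g x₁
  have hm₀ : g 0 0 * x₀ + g 0 1 = m₀ * u₀ := (div_mul_cancel₀ _ h₀).symm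
  have hm₁ : g 0 0 * x₁ + g 0 1 = m₁ * u₁ := (div_mul_cancel₀ _ h₁).symm
  -- each entry of `g`, times `x₁ - x₀`, is a combination of `u₀` and `u₁`; then Cauchy–Schwarz
  have ha : g 0 0 * (x₁ - x₀) = m₁ * u₁ - m₀ * u₀ := by linear_combination hm₁ - hm₀
  have hb : g 0 1 * (x₁ - x₀) = x₁ * (m₀ * u₀) - x₀ * (m₁ * u₁) := by
    linear_combination x₁ * hm₀ - x₀ * hm₁
  have hc : g 1 0 * (x₁ - x₀) = u₁ - u₀ := by ring
  have hd : g 1 1 * (x₁ - x₀) = x₁ * u₀ - x₀ * u₁ := by ring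
  have hsplit : frobSq g * (x₁ - x₀) ^ 2 = (g 0 0 * (x₁ - x₀)) ^ 2 + (g 0 1 * (x₁ - x₀)) ^ 2
      + (g 1 0 * (x₁ - x₀)) ^ 2 + (g 1 1 * (x₁ - x₀)) ^ 2 := by
    simp only [frobSq]; ring
  rw [hsplit, ha, hb, hc, hd]
  nlinarith [sq_nonneg (m₁ * u₀ + m₀ * u₁), sq_nonneg (x₀ * m₁ * u₀ + x₁ * m₀ * u₁),
    sq_nonneg (u₀ + u₁), sq_nonneg (x₀ * u₀ + x₁ * u₁)]

lemma denom_sq_le (g : SL2) (x : ℝ) : (g 1 0 * x + g 1 1) ^ 2 ≤ frobSq g * (1 + x ^ 2) := by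
  simp only [frobSq]
  nlinarith [sq_nonneg (g 1 0 - g 1 1 * x), mul_nonneg (add_nonneg (sq_nonneg (g 0 0))
    (sq_nonneg (g 0 1))) (add_nonneg zero_le_one (sq_nonneg x))]

lemma abs_add_mul_le {u c t Δ : ℝ} (hΔ : 0 < Δ) (hu : Δ * |c| ≤ |u|) :
    |u + c * t| ≤ (1 + |t| / Δ) * |u| := by
  have hct : |c * t| ≤ |t| / Δ * |u| := by
    rw [abs_mul, div_mul_eq_mul_div, le_div_iff₀ hΔ]
    nlinarith [abs_nonneg t]
  calc |u + c * t| ≤ |u| + |c * t| := abs_add_le _ _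
    _ ≤ (1 + |t| / Δ) * |u| := by linarith

lemma mul_abs_le_abs_mul_add_of_root_far {c d x Δ : ℝ} {J : Set ℝ}
    (hroot : ∀ y ∉ J, c * y + d ≠ 0) (hfar : ∀ y ∈ J, Δ ≤ |x - y|) :
    Δ * |c| ≤ |c * x + d| := by
  rcases eq_or_ne c 0 with rfl | hc
  · simp
  have hpole : -d / c ∈ J := by
    by_contra h
    exact hroot _ h (by field_simp; ring)
  calc Δ * |c| ≤ |x - -d / c| * |c| := by gcongr; exact hfar _ hpole
    _ = |c * x + d| := by rw [← abs_mul]; congr 1; field_simp; ring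

lemma le_mul_of_le_div_of_div_le {x y p q c₁ c₂ G : ℝ} (hc₁ : 0 < c₁) (hc₂ : 0 ≤ c₂)
    (hp : 0 < p) (hq : 0 < q) (hy : y ≤ c₂ / q) (hx : c₁ / p ≤ x) (hpq : p ≤ G * q) :
    y ≤ c₂ * G / c₁ * x := by
  have hG : 0 < G := pos_of_mul_pos_left (hp.trans_le hpq) hq.le
  calc y ≤ c₂ / q := hy
    _ ≤ c₂ * G / p := by
      rw [div_le_div_iff₀ hq hp]
      nlinarith [mul_le_mul_of_nonneg_left hpq hc₂]
    _ = c₂ * G / c₁ * (c₁ / p) := by field_simp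
    _ ≤ c₂ * G / c₁ * x := by gcongr

lemma exists_pos_forall_of_eventually {ι : Type*} [Finite ι] {P : ι → ℝ → Prop}
    (h : ∀ i, ∀ᶠ ε in 𝓝[>] 0, P i ε) : ∃ ε > 0, ∀ i, P i ε :=
  ((Filter.eventually_all.mpr h).and self_mem_nhdsWithin).exists.imp fun _ h => ⟨h.2, h.1⟩

lemma sq_le_sq_of_abs_le {x M : ℝ} (h : |x| ≤ M) : x ^ 2 ≤ M ^ 2 :=
  sq_le_sq.mpr (h.trans (le_abs_self M))

section MobiusLength

variable (g : SL2) {x₀ x₁ M L : ℝ}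

lemma div_le_mobius_length (hL : 0 ≤ L) (hLx : L ≤ x₁ - x₀) (hx₀ : |x₀| ≤ M) (hx₁ : |x₁| ≤ M)
    (hpos : 0 < (g 1 0 * x₀ + g 1 1) * (g 1 0 * x₁ + g 1 1)) :
    L / ((1 + M ^ 2) * frobSq g)
      ≤ (x₁ - x₀) / ((g 1 0 * x₀ + g 1 1) * (g 1 0 * x₁ + g 1 1)) := by
  have h₀ := denom_sq_le g x₀
  have h₁ := denom_sq_le g x₁
  have hfrob := frobSq_pos g
  have hprod : (g 1 0 * x₀ + g 1 1) * (g 1 0 * x₁ + g 1 1) ≤ (1 + M ^ 2) * frobSq g := by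
    nlinarith [sq_le_sq_of_abs_le hx₀, sq_le_sq_of_abs_le hx₁,
      sq_nonneg (g 1 0 * x₀ + g 1 1 - (g 1 0 * x₁ + g 1 1))]
  exact div_le_div₀ (hL.trans hLx) hLx hpos hprod

/-- `Δ * |c| ≤ |c x + d|` says that the pole `-d / c` lies at distance at least `Δ` from `x`. -/
lemma denom_sq_add_sq_le {Δ : ℝ} (hΔ : 0 < Δ) (hspan : |x₁ - x₀| ≤ 2 * M)
    (hfar₀ : Δ * |g 1 0| ≤ |g 1 0 * x₀ + g 1 1|) (hfar₁ : Δ * |g 1 0| ≤ |g 1 0 * x₁ + g 1 1|)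
    (hpos : 0 < (g 1 0 * x₀ + g 1 1) * (g 1 0 * x₁ + g 1 1)) :
    (g 1 0 * x₀ + g 1 1) ^ 2 + (g 1 0 * x₁ + g 1 1) ^ 2
      ≤ 2 * (1 + 2 * M / Δ) * ((g 1 0 * x₀ + g 1 1) * (g 1 0 * x₁ + g 1 1)) := by
  set u₀ := g 1 0 * x₀ + g 1 1
  set u₁ := g 1 0 * x₁ + g 1 1
  have hK : 1 + |x₁ - x₀| / Δ ≤ 1 + 2 * M / Δ := by gcongr
  have h₁ : |u₁| ≤ (1 + 2 * M / Δ) * |u₀| := by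
    have := abs_add_mul_le (t := x₁ - x₀) hΔ hfar₀
    rw [show u₀ + g 1 0 * (x₁ - x₀) = u₁ by ring] at this
    exact this.trans (mul_le_mul_of_nonneg_right hK (abs_nonneg _))
  have h₀ : |u₀| ≤ (1 + 2 * M / Δ) * |u₁| := by
    have := abs_add_mul_le (t := x₀ - x₁) hΔ hfar₁
    rw [show u₁ + g 1 0 * (x₀ - x₁) = u₀ by ring, abs_sub_comm] at this
    exact this.trans (mul_le_mul_of_nonneg_right hK (abs_nonneg _))
  rw [← abs_of_pos hpos, abs_mul, ← sq_abs u₀, ← sq_abs u₁]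
  nlinarith [abs_nonneg u₀, abs_nonneg u₁]

lemma mobius_length_le_div {Δ : ℝ} (hΔ : 0 < Δ) (hL : 0 < L) (hLx : L ≤ x₁ - x₀)
    (hx₀ : |x₀| ≤ M) (hx₁ : |x₁| ≤ M) (hm₀ : |mobius g x₀| ≤ M) (hm₁ : |mobius g x₁| ≤ M)
    (hfar₀ : Δ * |g 1 0| ≤ |g 1 0 * x₀ + g 1 1|) (hfar₁ : Δ * |g 1 0| ≤ |g 1 0 * x₁ + g 1 1|)
    (hpos : 0 < (g 1 0 * x₀ + g 1 1) * (g 1 0 * x₁ + g 1 1)) :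
    (x₁ - x₀) / ((g 1 0 * x₀ + g 1 1) * (g 1 0 * x₁ + g 1 1))
      ≤ 4 * (1 + 2 * M / Δ) * (1 + M ^ 2) ^ 2 / (L * frobSq g) := by
  have hspan : |x₁ - x₀| ≤ 2 * M := by
    rw [abs_le] at hx₀ hx₁ ⊢; constructor <;> linarith
  have hsum := denom_sq_add_sq_le g hΔ hspan hfar₀ hfar₁ hpos
  have hcoef : (1 + mobius g x₁ ^ 2) * (1 + x₀ ^ 2) + (1 + mobius g x₀ ^ 2) * (1 + x₁ ^ 2)
      ≤ 2 * (1 + M ^ 2) ^ 2 := by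
    have := sq_le_sq_of_abs_le hx₀; have := sq_le_sq_of_abs_le hx₁
    have := sq_le_sq_of_abs_le hm₀; have := sq_le_sq_of_abs_le hm₁
    nlinarith [sq_nonneg x₀, sq_nonneg x₁, sq_nonneg (mobius g x₀), sq_nonneg (mobius g x₁)]
  have hent := frobSq_mul_sq_le g (left_ne_zero_of_mul hpos.ne') (right_ne_zero_of_mul hpos.ne')
  have hfrob := frobSq_pos g
  rw [div_le_div_iff₀ hpos (mul_pos hL hfrob)]
  calc (x₁ - x₀) * (L * frobSq g) ≤ frobSq g * (x₁ - x₀) ^ 2 := by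
        nlinarith [mul_le_mul_of_nonneg_left hLx (mul_nonneg (hL.le.trans hLx) hfrob.le)]
    _ ≤ 2 * (1 + M ^ 2) ^ 2
          * (2 * (1 + 2 * M / Δ) * ((g 1 0 * x₀ + g 1 1) * (g 1 0 * x₁ + g 1 1))) :=
        hent.trans (mul_le_mul hcoef hsum (by positivity) (by positivity))
    _ = 4 * (1 + 2 * M / Δ) * (1 + M ^ 2) ^ 2
          * ((g 1 0 * x₀ + g 1 1) * (g 1 0 * x₁ + g 1 1)) := by ring

end MobiusLength

lemma bar_val {r : ℕ} (a : Fin (2 * r)) :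
    (bar a : ℕ) = if (a : ℕ) < r then a + r else a - r := by
  unfold bar
  split_ifs <;> rfl

lemma bar_bar {r : ℕ} (a : Fin (2 * r)) : bar (bar a) = a := by
  ext
  simp only [bar_val]
  split_ifs <;> omega

namespace SchottkyData

variable {r : ℕ} (S : SchottkyData r)

lemma wordγ_nil : S.wordγ [] = 1 := rfl

lemma wordγ_cons (a : Fin (2 * r)) (l : List (Fin (2 * r))) :
    S.wordγ (a :: l) = S.γ a * S.wordγ l := by
  simp [wordγ]

lemma wordγ_reverse_map_bar (l : List (Fin (2 * r))) :
    S.wordγ (l.map bar).reverse = (S.wordγ l)⁻¹ := by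
  have hmap : (l.map bar).reverse.map S.γ = ((l.map S.γ).map (·⁻¹)).reverse := by
    rw [List.map_reverse, List.map_map, List.map_map]
    exact congrArg List.reverse (List.map_congr_left fun a _ => S.hinv a)
  rw [wordγ, wordγ, hmap, List.prod_inv_reverse]

section IsWord

variable {S}

lemma isWord_iff {l : List (Fin (2 * r))} : S.IsWord l ↔ l.IsChain fun p q => q ≠ bar p :=
  Iff.rfl

lemma IsWord.reverse_map_bar {l : List (Fin (2 * r))} (hw : S.IsWord l) :
    S.IsWord (l.map bar).reverse := by
  rw [isWord_iff, List.isChain_reverse, List.isChain_map]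
  exact hw.imp fun a b hab => by rw [bar_bar]; exact hab.symm

lemma IsWord.getLast_ne_bar {l : List (Fin (2 * r))} (hw : S.IsWord l) (hl : l ≠ [])
    (h : l.dropLast ≠ []) : l.getLast hl ≠ bar (l.dropLast.getLast h) := by
  have hw' : S.IsWord (l.dropLast ++ [l.getLast hl]) := by rwa [List.dropLast_append_getLast hl]
  rw [isWord_iff, List.isChain_append] at hw'
  exact hw'.2.2 _ (List.getLast?_eq_some_getLast h) _ rfl

end IsWord

lemma pingpong_letter (a : Fin (2 * r)) {x : ℝ}
    (hx : x ∉ Ioo (S.ξ₀ (bar a)) (S.ξ₁ (bar a))) :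
    S.γ a 1 0 * x + S.γ a 1 1 ≠ 0 ∧ mobius (S.γ a) x ∈ Icc (S.ξ₀ a) (S.ξ₁ a) := by
  have hmem : mobiusOP (S.γ a) x ∈ (fun t : ℝ => (t : OnePoint ℝ)) '' Icc (S.ξ₀ a) (S.ξ₁ a) := by
    rw [← S.hmap a]
    exact ⟨x, ⟨mem_univ _, fun ⟨t, ht, hte⟩ => hx (OnePoint.coe_injective hte ▸ ht)⟩, rfl⟩
  obtain ⟨t, ht, hte⟩ := hmem
  rw [mobiusOP_coe] at hte
  split_ifs at hte with hD
  · exact absurd hte (OnePoint.coe_ne_infty t)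
  · exact ⟨hD, OnePoint.coe_injective hte ▸ ht⟩

lemma pingpong {l : List (Fin (2 * r))} (hl : l ≠ []) (hw : S.IsWord l) {x : ℝ}
    (hx : x ∉ Ioo (S.ξ₀ (bar (l.getLast hl))) (S.ξ₁ (bar (l.getLast hl)))) :
    S.wordγ l 1 0 * x + S.wordγ l 1 1 ≠ 0 ∧
      mobius (S.wordγ l) x ∈ Icc (S.ξ₀ (l.head hl)) (S.ξ₁ (l.head hl)) := by
  induction l with
  | nil => exact absurd rfl hl
  | cons a t ih =>
    rcases eq_or_ne t [] with rfl | ht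
    · simpa [wordγ] using S.pingpong_letter a hx
    rw [List.getLast_cons ht] at hx
    obtain ⟨hD, hmem⟩ := ih ht hw.tail hx
    have hhead : t.head ht ≠ bar a := (List.isChain_cons.mp hw).1 _ (List.head?_eq_some_head ht)
    have hout : mobius (S.wordγ t) x ∉ Ioo (S.ξ₀ (bar a)) (S.ξ₁ (bar a)) := fun h =>
      Set.disjoint_left.mp (S.hdisj _ _ hhead) hmem (Ioo_subset_Icc_self h)
    obtain ⟨hD', hmem'⟩ := S.pingpong_letter a hout
    rw [wordγ_cons, denom_mul _ _ hD, mobius_mul _ _ hD]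
    exact ⟨mul_ne_zero hD hD', hmem'⟩

lemma exists_abs_le : ∃ M, 0 ≤ M ∧ ∀ a, ∀ x ∈ Icc (S.ξ₀ a) (S.ξ₁ a), |x| ≤ M := by
  obtain ⟨M, hM⟩ := Finite.exists_le fun a => max |S.ξ₀ a| |S.ξ₁ a|
  exact ⟨max M 0, le_max_right _ _, fun a x hx =>
    (abs_le_max_abs_abs hx.1 hx.2).trans ((hM a).trans (le_max_left _ _))⟩

lemma exists_le_sub : ∃ L > 0, ∀ a, L ≤ S.ξ₁ a - S.ξ₀ a :=
  exists_pos_forall_of_eventually fun a =>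
    ((eventually_lt_nhds (sub_pos.mpr (S.hlt a))).filter_mono nhdsWithin_le_nhds).mono
      fun _ h => h.le

lemma exists_gap : ∃ Δ > 0, ∀ a b, a ≠ b → ∀ x ∈ Icc (S.ξ₀ a) (S.ξ₁ a),
    ∀ y ∈ Icc (S.ξ₀ b) (S.ξ₁ b), Δ ≤ |x - y| := by
  suffices h : ∀ p : Fin (2 * r) × Fin (2 * r), ∀ᶠ Δ in 𝓝[>] 0, p.1 ≠ p.2 →
      ∀ x ∈ Icc (S.ξ₀ p.1) (S.ξ₁ p.1), ∀ y ∈ Icc (S.ξ₀ p.2) (S.ξ₁ p.2), Δ ≤ |x - y| by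
    obtain ⟨Δ, hΔ, hgap⟩ := exists_pos_forall_of_eventually h
    exact ⟨Δ, hΔ, fun a b => hgap (a, b)⟩
  rintro ⟨a, b⟩
  by_cases hab : a = b
  · exact Eventually.of_forall fun _ h => absurd hab h
  obtain ⟨δ, hδ, hsep⟩ :=
    Metric.exists_pos_forall_lt_edist isCompact_Icc isClosed_Icc (S.hdisj a b hab)
  filter_upwards [(eventually_lt_nhds (NNReal.coe_pos.mpr hδ)).filter_mono nhdsWithin_le_nhds]
    with Δ hΔ _ x hx y hy
  have := hsep x hx y hy
  rw [edist_dist, ← ENNReal.ofReal_coe_nnreal, ENNReal.ofReal_lt_ofReal_iff_of_nonneg δ.coe_nonneg,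
    Real.dist_eq] at this
  linarith

lemma wordγ_dropLast_denom {M Δ : ℝ} (hM : ∀ a, ∀ x ∈ Icc (S.ξ₀ a) (S.ξ₁ a), |x| ≤ M)
    (hΔ : ∀ a b, a ≠ b → ∀ x ∈ Icc (S.ξ₀ a) (S.ξ₁ a), ∀ y ∈ Icc (S.ξ₀ b) (S.ξ₁ b), Δ ≤ |x - y|)
    {l : List (Fin (2 * r))} (hl : l ≠ []) (hw : S.IsWord l) {x : ℝ}
    (hx : x ∈ Icc (S.ξ₀ (l.getLast hl)) (S.ξ₁ (l.getLast hl))) :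
    S.wordγ l.dropLast 1 0 * x + S.wordγ l.dropLast 1 1 ≠ 0 ∧
      |mobius (S.wordγ l.dropLast) x| ≤ M ∧
      Δ * |S.wordγ l.dropLast 1 0| ≤ |S.wordγ l.dropLast 1 0 * x + S.wordγ l.dropLast 1 1| := by
  rcases eq_or_ne l.dropLast [] with h | h
  · simpa [h, wordγ_nil, mobius_one] using hM _ _ hx
  have hlast := hw.getLast_ne_bar hl h
  have hw' : S.IsWord l.dropLast := List.IsChain.dropLast hw
  have hout : x ∉ Ioo (S.ξ₀ (bar (l.dropLast.getLast h))) (S.ξ₁ (bar (l.dropLast.getLast h))) :=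
    fun h' => Set.disjoint_left.mp (S.hdisj _ _ hlast) hx (Ioo_subset_Icc_self h')
  obtain ⟨hD, hmem⟩ := S.pingpong h hw' hout
  exact ⟨hD, hM _ _ hmem, mul_abs_le_abs_mul_add_of_root_far (fun y hy => (S.pingpong h hw' hy).1)
    fun y hy => hΔ _ _ hlast _ hx _ (Ioo_subset_Icc_self hy)⟩

lemma ivlen_wordI_bounds : ∃ c₁ > 0, ∃ c₂ > 0, ∀ l : List (Fin (2 * r)), l ≠ [] → S.IsWord l →
    c₁ / frobSq (S.wordγ l.dropLast) ≤ ivlen (S.wordI l) ∧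
      ivlen (S.wordI l) ≤ c₂ / frobSq (S.wordγ l.dropLast) := by
  obtain ⟨M, hM₀, hM⟩ := S.exists_abs_le
  obtain ⟨Δ, hΔ₀, hΔ⟩ := S.exists_gap
  obtain ⟨L, hL₀, hL⟩ := S.exists_le_sub
  refine ⟨L / (1 + M ^ 2), by positivity, 4 * (1 + 2 * M / Δ) * (1 + M ^ 2) ^ 2 / L,
    by positivity, fun l hl hw => ?_⟩
  set g := S.wordγ l.dropLast
  set b := l.getLast hl
  have hdata := fun x (hx : x ∈ Icc (S.ξ₀ b) (S.ξ₁ b)) => S.wordγ_dropLast_denom hM hΔ hl hw hx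
  have hx₀ : S.ξ₀ b ∈ Icc (S.ξ₀ b) (S.ξ₁ b) := left_mem_Icc.mpr (S.hlt b).le
  have hx₁ : S.ξ₁ b ∈ Icc (S.ξ₀ b) (S.ξ₁ b) := right_mem_Icc.mpr (S.hlt b).le
  have hden : ∀ x ∈ Icc (S.ξ₀ b) (S.ξ₁ b), g 1 0 * x + g 1 1 ≠ 0 := fun x hx => (hdata x hx).1
  have hpos := denom_mul_denom_pos g hden hx₀ hx₁
  rw [wordI, dif_neg hl, ivlen_mobius_image_Icc g hden (S.hlt b).le, div_div, div_div]
  exact ⟨div_le_mobius_length g hL₀.le (hL b) (hM _ _ hx₀) (hM _ _ hx₁) hpos,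
    mobius_length_le_div g hΔ₀ hL₀ (hL b) (hM _ _ hx₀) (hM _ _ hx₁) (hdata _ hx₀).2.1
      (hdata _ hx₁).2.1 (hdata _ hx₀).2.2 (hdata _ hx₁).2.2 hpos⟩

lemma exists_frobSq_dropLast_tail_le : ∃ G > 0, ∀ l : List (Fin (2 * r)), l ≠ [] →
    frobSq (S.wordγ l.dropLast) ≤ G * frobSq (S.wordγ l.tail) ∧
      frobSq (S.wordγ l.tail) ≤ G * frobSq (S.wordγ l.dropLast) := by
  obtain ⟨G, hG⟩ := Finite.exists_le fun a => frobSq (S.γ a)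
  have hG₁ : ∀ a, frobSq (S.γ a) ≤ max G 1 := fun a => (hG a).trans (le_max_left _ _)
  refine ⟨max G 1 ^ 2, by positivity, fun l hl => ?_⟩
  obtain ⟨a, t, rfl⟩ := List.exists_cons_of_ne_nil hl
  have hsplit : S.wordγ (a :: t) = S.wordγ (a :: t).dropLast * S.γ ((a :: t).getLast hl) := by
    conv_lhs => rw [← List.dropLast_append_getLast hl]
    simp [wordγ]
  set b := (a :: t).getLast hl
  have hfirst := wordγ_cons S a t
  have hm : 0 ≤ max G 1 := zero_le_one.trans (le_max_right _ _)
  have ht := frobSq_pos (S.wordγ t)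
  have hd := frobSq_pos (S.wordγ (a :: t).dropLast)
  constructor
  · calc frobSq (S.wordγ (a :: t).dropLast)
        ≤ frobSq (S.wordγ (a :: t)) * frobSq (S.γ b) := by
          rw [hsplit]; exact frobSq_left_le_mul _ _
      _ ≤ frobSq (S.γ a) * frobSq (S.wordγ t) * max G 1 := by
          rw [hfirst]
          exact mul_le_mul (frobSq_mul_le _ _) (hG₁ b) (frobSq_pos _).le
            (mul_pos (frobSq_pos _) ht).le
      _ ≤ max G 1 ^ 2 * frobSq (S.wordγ t) := by
          nlinarith [mul_le_mul_of_nonneg_right (hG₁ a) (mul_nonneg ht.le hm)]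
  · calc frobSq (S.wordγ t)
        ≤ frobSq (S.γ a) * frobSq (S.wordγ (a :: t)) := by
          rw [hfirst]; exact frobSq_right_le_mul _ _
      _ ≤ max G 1 * (frobSq (S.wordγ (a :: t).dropLast) * frobSq (S.γ b)) := by
          rw [hsplit]
          exact mul_le_mul (hG₁ a) (frobSq_mul_le _ _) (frobSq_pos _).le hm
      _ ≤ max G 1 ^ 2 * frobSq (S.wordγ (a :: t).dropLast) := by
          nlinarith [mul_le_mul_of_nonneg_left (hG₁ b) (mul_nonneg hm hd.le)]

end SchottkyData

/-- **Reversal:** there is `C_Γ > 0` depending only on the Schottky data such that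
`C_Γ⁻¹|I_𝐚| ≤ |I_{𝐚̄}| ≤ C_Γ|I_𝐚|` for every nonempty word `𝐚`, where
`𝐚̄ = ā_n…ā_1` is the reversed-and-barred word. -/
theorem reversal (r : ℕ) (S : SchottkyData r) :
    ∃ C > (0 : ℝ), ∀ l : List (Fin (2 * r)), l ≠ [] → S.IsWord l →
      C⁻¹ * ivlen (S.wordI l) ≤ ivlen (S.wordI ((l.map bar).reverse)) ∧
      ivlen (S.wordI ((l.map bar).reverse)) ≤ C * ivlen (S.wordI l) := by
  obtain ⟨c₁, hc₁, c₂, hc₂, hI⟩ := S.ivlen_wordI_bounds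
  obtain ⟨G, hG, hcomp⟩ := S.exists_frobSq_dropLast_tail_le
  refine ⟨c₂ * G / c₁, by positivity, fun l hl hw => ?_⟩
  have hfrob : frobSq (S.wordγ ((l.map bar).reverse).dropLast) = frobSq (S.wordγ l.tail) := by
    rw [List.dropLast_reverse, ← List.map_tail, S.wordγ_reverse_map_bar, frobSq_inv]
  obtain ⟨hlow, hup⟩ := hI l hl hw
  obtain ⟨hlow', hup'⟩ := hI _ (by simpa using hl) hw.reverse_map_bar
  rw [hfrob] at hlow' hup'
  obtain ⟨hdt, htd⟩ := hcomp l hl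
  refine ⟨(inv_mul_le_iff₀ (by positivity)).mpr ?_, ?_⟩
  · exact le_mul_of_le_div_of_div_le hc₁ hc₂.le (frobSq_pos _) (frobSq_pos _) hup hlow' htd
  · exact le_mul_of_le_div_of_div_le hc₁ hc₂.le (frobSq_pos _) (frobSq_pos _) hup' hlow hdt
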